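/- For the symmetric coupled Gaussian density f(x) = (1/Z)(1 + κ(x/σ)²)^{-(1+κ)/(2κ)} with σ > 0, κ > 0, the third moment of the normalized 4th-power density is zero, and the fourth moment of the normalized 5th-power density equals 3σ⁴/(5(5+2κ)). -/

import Mathlib

/-!
The density is even, so its odd moments vanish. Its fifth power is, up to a constant factor,
the weight `(1 + a x²)^(-p)` with `a = κ / σ²` and `2p = 5 (1 + κ) / κ`. Since
`x^(k+1) (1 + a x²)^(1-p)` vanishes at `±∞`, its derivative integrates to zero, which gives the
recursion `(k + 1) I_k = a (2p - 3 - k) I_(k+2)` for the moments `I_k = ∫ x^k (1 + a x²)^(-p)`.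
Hence `I_4 / I_0 = 3 / (a² (2p - 3) (2p - 5)) = 3 σ⁴ / (5 (5 + 2κ))`.
-/

open MeasureTheory Set Real

noncomputable def betaFn (a b : ℝ) : ℝ := Real.Gamma a * Real.Gamma b / Real.Gamma (a + b)

open Filter Topology

theorem betaFn_pos {a b : ℝ} (ha : 0 < a) (hb : 0 < b) : 0 < betaFn a b := by
  have := Gamma_pos_of_pos ha
  have := Gamma_pos_of_pos hb
  have := Gamma_pos_of_pos (add_pos ha hb)
  unfold betaFn
  positivity

theorem Function.Odd.integral_eq_zero {G E : Type*} [MeasurableSpace G] [AddGroup G]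
    [MeasurableNeg G] [NormedAddCommGroup E] [NormedSpace ℝ E] {μ : Measure G}
    [μ.IsNegInvariant] {g : G → E} (hg : g.Odd) : ∫ x, g x ∂μ = 0 := by
  have h : ∫ x, g x ∂μ = -∫ x, g x ∂μ :=
    calc ∫ x, g x ∂μ = ∫ x, g (-x) ∂μ := (integral_neg_eq_self g μ).symm
      _ = ∫ x, -g x ∂μ := by simp only [hg.eq]
      _ = -∫ x, g x ∂μ := integral_neg g
  have h2 : (2 : ℝ) • ∫ x, g x ∂μ = 0 := by
    rw [two_smul]; nth_rw 1 [h]; exact neg_add_cancel _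
  exact (smul_eq_zero.mp h2).resolve_left two_ne_zero

section RationalWeight

variable {a p : ℝ}

theorem abs_pow_mul_one_add_mul_sq_rpow_neg_le (ha : 0 < a) (hp : 0 ≤ p) (m : ℕ)
    (x : ℝ) :
    |x ^ m * (1 + a * x ^ 2) ^ (-p)| ≤ min a 1 ^ (-p) * (1 + x ^ 2) ^ ((m : ℝ) / 2 - p) := by
  have hc : 0 < min a 1 := lt_min ha one_pos
  have h1 : 0 < 1 + x ^ 2 := by positivity
  have hpow : |x| ^ m ≤ (1 + x ^ 2) ^ ((m : ℝ) / 2) := by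
    calc |x| ^ m = (x ^ 2) ^ ((m : ℝ) / 2) := by
          rw [← sq_abs, ← rpow_natCast, ← rpow_natCast, ← rpow_mul (abs_nonneg x)]
          congr 1; ring
      _ ≤ (1 + x ^ 2) ^ ((m : ℝ) / 2) := by gcongr; linarith
  have hweight : min a 1 * (1 + x ^ 2) ≤ 1 + a * x ^ 2 := by
    nlinarith [min_le_left a 1, min_le_right a 1, sq_nonneg x]
  calc |x ^ m * (1 + a * x ^ 2) ^ (-p)| = |x| ^ m * (1 + a * x ^ 2) ^ (-p) := by
        rw [abs_mul, abs_pow, abs_of_pos (rpow_pos_of_pos (by positivity) _)]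
    _ ≤ (1 + x ^ 2) ^ ((m : ℝ) / 2) * (min a 1 * (1 + x ^ 2)) ^ (-p) := by
        gcongr ?_ * ?_
        exact rpow_le_rpow_of_nonpos (by positivity) hweight (neg_nonpos.mpr hp)
    _ = min a 1 ^ (-p) * (1 + x ^ 2) ^ ((m : ℝ) / 2 - p) := by
        rw [mul_rpow hc.le h1.le, sub_eq_add_neg, rpow_add h1]
        ring

theorem integrable_pow_mul_one_add_mul_sq_rpow_neg (ha : 0 < a) {m : ℕ}
    (hp : (m : ℝ) + 1 < 2 * p) :
    Integrable (fun x : ℝ ↦ x ^ m * (1 + a * x ^ 2) ^ (-p)) := by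
  have hdom : Integrable (fun x : ℝ ↦ min a 1 ^ (-p) * (1 + x ^ 2) ^ ((m : ℝ) / 2 - p)) := by
    have := (integrable_rpow_neg_one_add_norm_sq (E := ℝ) (μ := volume) (r := 2 * p - m)
      (by simp; linarith)).const_mul (min a 1 ^ (-p))
    convert this using 3 with x
    rw [norm_eq_abs, sq_abs]
    ring_nf
  refine hdom.mono' (by fun_prop (disch := intro x; positivity)) (ae_of_all _ fun x ↦ ?_)
  exact abs_pow_mul_one_add_mul_sq_rpow_neg_le ha (by linarith [m.cast_nonneg (α := ℝ)]) m x

theorem tendsto_pow_mul_one_add_mul_sq_rpow_neg_cocompact (ha : 0 < a) {m : ℕ}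
    (hp : (m : ℝ) < 2 * p) :
    Tendsto (fun x : ℝ ↦ x ^ m * (1 + a * x ^ 2) ^ (-p)) (cocompact ℝ) (𝓝 0) := by
  have hsq : Tendsto (fun x : ℝ ↦ 1 + x ^ 2) (cocompact ℝ) atTop := by
    simpa only [Function.comp_def, norm_eq_abs, sq_abs] using tendsto_atTop_add_const_left _ 1
      ((tendsto_pow_atTop two_ne_zero).comp (tendsto_norm_cocompact_atTop (E := ℝ)))
  have hdom : Tendsto (fun x : ℝ ↦ min a 1 ^ (-p) * (1 + x ^ 2) ^ ((m : ℝ) / 2 - p))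
      (cocompact ℝ) (𝓝 0) := by
    simpa using ((tendsto_rpow_neg_atTop (y := p - m / 2) (by linarith)).comp hsq).const_mul
      (min a 1 ^ (-p))
  exact squeeze_zero_norm
    (abs_pow_mul_one_add_mul_sq_rpow_neg_le ha (by linarith [m.cast_nonneg (α := ℝ)]) m) hdom

theorem hasDerivAt_pow_succ_mul_one_add_mul_sq_rpow (ha : 0 ≤ a) (p : ℝ) (k : ℕ)
    (x : ℝ) :
    HasDerivAt (fun x : ℝ ↦ x ^ (k + 1) * (1 + a * x ^ 2) ^ (-(p - 1)))
      ((k + 1) * (x ^ k * (1 + a * x ^ 2) ^ (-p))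
        + a * (k + 3 - 2 * p) * (x ^ (k + 2) * (1 + a * x ^ 2) ^ (-p))) x := by
  have hb : 0 < 1 + a * x ^ 2 := by positivity
  have hpow : HasDerivAt (fun x : ℝ ↦ x ^ (k + 1)) ((k + 1) * x ^ k) x := by
    simpa using hasDerivAt_pow (k + 1) x
  have hbase : HasDerivAt (fun x : ℝ ↦ 1 + a * x ^ 2) (a * (2 * x)) x := by
    simpa using ((hasDerivAt_pow 2 x).const_mul a).const_add 1
  refine (hpow.mul (hbase.rpow_const (p := -(p - 1)) (Or.inl hb.ne'))).congr_deriv ?_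
  rw [show -(p - 1) = 1 + -p by ring, show 1 + -p - 1 = -p by ring, rpow_add hb, rpow_one]
  ring

theorem integral_pow_mul_one_add_mul_sq_rpow_neg_recurrence (ha : 0 < a) {k : ℕ}
    (hp : (k : ℝ) + 3 < 2 * p) :
    (k + 1) * ∫ x : ℝ, x ^ k * (1 + a * x ^ 2) ^ (-p)
      = a * (2 * p - 3 - k) * ∫ x : ℝ, x ^ (k + 2) * (1 + a * x ^ 2) ^ (-p) := by
  have hk : (0 : ℝ) ≤ k := k.cast_nonneg
  have hint_k := integrable_pow_mul_one_add_mul_sq_rpow_neg ha (m := k) (by linarith)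
  have hint_k2 := integrable_pow_mul_one_add_mul_sq_rpow_neg ha (m := k + 2)
    (by push_cast; linarith)
  have hdecay := tendsto_pow_mul_one_add_mul_sq_rpow_neg_cocompact ha (p := p - 1) (m := k + 1)
    (by push_cast; linarith)
  have hFTC := integral_of_hasDerivAt_of_tendsto
    (hasDerivAt_pow_succ_mul_one_add_mul_sq_rpow ha.le p k)
    ((hint_k.const_mul _).add (hint_k2.const_mul _))
    (hdecay.mono_left atBot_le_cocompact) (hdecay.mono_left atTop_le_cocompact)
  rw [integral_add (hint_k.const_mul _) (hint_k2.const_mul _), integral_const_mul,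
    integral_const_mul] at hFTC
  linear_combination hFTC

theorem integral_one_add_mul_sq_rpow_neg_pos (ha : 0 < a) (hp : 1 < 2 * p) :
    0 < ∫ x : ℝ, (1 + a * x ^ 2) ^ (-p) := by
  have hint := integrable_pow_mul_one_add_mul_sq_rpow_neg ha (m := 0) (p := p) (by simpa)
  simp only [pow_zero, one_mul] at hint
  exact integral_pos_of_integrable_nonneg_nonzero (x := 0)
    ((by fun_prop : Continuous fun x : ℝ ↦ 1 + a * x ^ 2).rpow_const
      fun x ↦ Or.inl (by positivity)) hint
    (fun x ↦ rpow_nonneg (by positivity) _) (by simp)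

theorem integral_pow_four_mul_div_integral (ha : 0 < a) (hp : 5 < 2 * p) :
    (∫ x : ℝ, x ^ 4 * (1 + a * x ^ 2) ^ (-p)) / ∫ x : ℝ, (1 + a * x ^ 2) ^ (-p)
      = 3 / (a ^ 2 * (2 * p - 3) * (2 * p - 5)) := by
  have h0 := integral_pow_mul_one_add_mul_sq_rpow_neg_recurrence ha (p := p) (k := 0)
    (by norm_num; linarith)
  have h2 := integral_pow_mul_one_add_mul_sq_rpow_neg_recurrence ha (p := p) (k := 2)
    (by norm_num; linarith)
  norm_num at h0 h2
  have hpos := integral_one_add_mul_sq_rpow_neg_pos ha (p := p) (by linarith)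
  have h3 : 0 < 2 * p - 3 := by linarith
  have h5 : 0 < 2 * p - 5 := by linarith
  rw [div_eq_div_iff hpos.ne' (by positivity)]
  linear_combination (-(a * (2 * p - 3))) * h2 - 3 * h0

end RationalWeight

theorem stmt_6 (σ κ : ℝ) (hσ : 0 < σ) (hκ : 0 < κ)
    (f : ℝ → ℝ)
    (hf : ∀ x, f x = (Real.sqrt κ / (σ * betaFn (1 / (2 * κ)) (1 / 2))) *
        (1 + κ * x ^ 2 / σ ^ 2) ^ (-(1 + κ) / (2 * κ))) :
    (∫ x : ℝ, x ^ 3 * f x ^ 4) / (∫ x : ℝ, f x ^ 4) = 0 ∧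
    (∫ x : ℝ, x ^ 4 * f x ^ 5) / (∫ x : ℝ, f x ^ 5) = 3 * σ ^ 4 / (5 * (5 + 2 * κ)) := by
  have hodd : Function.Odd fun x ↦ x ^ 3 * f x ^ 4 := fun x ↦ by simp only [hf, neg_sq]; ring
  refine ⟨by rw [hodd.integral_eq_zero, zero_div], ?_⟩
  set C := Real.sqrt κ / (σ * betaFn (1 / (2 * κ)) (1 / 2))
  have hC : C ≠ 0 :=
    (div_pos (sqrt_pos.mpr hκ) (mul_pos hσ (betaFn_pos (by positivity) one_half_pos))).ne'
  have hf5 (x : ℝ) :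
      f x ^ 5 = C ^ 5 * (1 + κ / σ ^ 2 * x ^ 2) ^ (-(5 * (1 + κ) / (2 * κ))) := by
    rw [hf, mul_pow, ← rpow_mul_natCast (by positivity)]
    congr 2 <;> [ring; (push_cast; ring)]
  have hp5 : 2 * (5 * (1 + κ) / (2 * κ)) - 5 = 5 / κ := by field_simp; ring
  have hp3 : 2 * (5 * (1 + κ) / (2 * κ)) - 3 = (5 + 2 * κ) / κ := by field_simp; ring
  have hp : 5 < 2 * (5 * (1 + κ) / (2 * κ)) := by
    have : 0 < 5 / κ := by positivity
    linarith
  simp_rw [hf5, mul_left_comm _ (C ^ 5), integral_const_mul,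
    mul_div_mul_left _ _ (pow_ne_zero 5 hC),
    integral_pow_four_mul_div_integral (by positivity : 0 < κ / σ ^ 2) hp, hp3, hp5]
  field_simp
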